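/- Let S be a quaternionic-linear endomorphism of ℍ² (a 2-dimensional right quaternionic vector space) satisfying S² = -id. Then for every nonzero v ∈ ℍ², the quaternionic line spanned by v and the quaternionic line spanned by S(v) together span ℍ² or coincide; moreover there exists a nonzero vector w such that S(w) = w·i, i.e., the quaternionic line through w is an eigenline of S. -/

import Mathlib

/-- The quaternions. -/
abbrev H : Type := Quaternion ℝ

/-- `ℍ²`, the right quaternionic vector space of pairs of quaternions. -/
abbrev H2 : Type := Fin 2 → H

/-- Right scalar multiplication on `ℍ²`. -/
noncomputable def rsmul (v : H2) (q : H) : H2 := fun i => v i * q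

/-- A map `S : ℍ² → ℍ²` is right quaternionic linear. -/
def RightLinear (S : H2 → H2) : Prop :=
  (∀ v w : H2, S (v + w) = S v + S w) ∧ (∀ (v : H2) (q : H), S (rsmul v q) = rsmul (S v) q)

/-- The quaternionic line `v·ℍ` spanned by `v`. -/
def lineOf (v : H2) : Set H2 := {w | ∃ q : H, w = rsmul v q}

/-! Over the division ring `ℍᵐᵒᵖ`, right multiplication makes `ℍ²` a plane, so two nonzero vectors
`v`, `S v` are either proportional or span it. For the eigenvector, `w = v - S v · i` satisfies
`S w = w · i`; if `w = 0` then `S v = -v · i`, and since `j` anticommutes with `i`,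
`S (v · j) = (v · j) · i`. -/

open Module Submodule MulOpposite

theorem span_singleton_eq_or_span_pair_eq_top {K V : Type*} [DivisionRing K] [AddCommGroup V]
    [Module K V] (hV : finrank K V = 2) {x y : V} (hx : x ≠ 0) (hy : y ≠ 0) :
    K ∙ x = K ∙ y ∨ span K {x, y} = ⊤ := by
  by_cases hxy : ∃ a : K, a • x = y
  · obtain ⟨a, rfl⟩ := hxy
    have ha : a ≠ 0 := by rintro rfl; exact hy (zero_smul K x)
    exact .inl (span_singleton_smul_eq (Ne.isUnit ha) x).symm
  · push Not at hxy
    have hind : LinearIndependent K ![y, x] := linearIndependent_fin2.2 ⟨hx, hxy⟩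
    refine .inr ?_
    rw [Set.pair_comm, ← Matrix.range_cons_cons_empty]
    exact hind.span_eq_top_of_card_eq_finrank (by simp [hV])

theorem exists_ne_zero_apply_eq_smul {K V : Type*} [DivisionRing K] [AddCommGroup V] [Module K V]
    (f : V →ₗ[K] V) (hf : ∀ v, f (f v) = -v) {μ ν : K}
    (hμ : μ * μ = -1) (hν : ν ≠ 0) (hμν : μ * ν = -(ν * μ)) {v : V} (hv : v ≠ 0) :
    ∃ w ≠ 0, f w = μ • w := by
  by_cases hw : v - μ • f v = 0
  · have hfv : f v = -(μ • v) := calc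
      f v = -(μ • μ • f v) := by rw [smul_smul, hμ, neg_one_smul, neg_neg]
      _ = -(μ • v) := by rw [← sub_eq_zero.1 hw]
    refine ⟨ν • v, smul_ne_zero hν hv, ?_⟩
    rw [map_smul, hfv, smul_neg, smul_smul, smul_smul, hμν, neg_smul]
  · refine ⟨_, hw, ?_⟩
    rw [map_sub, map_smul, hf, smul_sub, smul_smul, hμ, smul_neg, neg_one_smul]
    abel

theorem rsmul_eq_op_smul (v : H2) (q : H) : rsmul v q = op q • v := rfl

theorem lineOf_eq_span (v : H2) : lineOf v = span Hᵐᵒᵖ {v} := by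
  ext w
  simp only [lineOf, Set.mem_ofPred_eq, SetLike.mem_coe, mem_span_singleton, rsmul_eq_op_smul,
    op_surjective.exists, eq_comm]

theorem finrank_H2 : finrank Hᵐᵒᵖ H2 = 2 :=
  (LinearEquiv.piCongrRight fun _ => opLinearEquiv Hᵐᵒᵖ).finrank_eq.trans (finrank_fin_fun _)

def RightLinear.toLinearMap {S : H2 → H2} (hS : RightLinear S) : H2 →ₗ[Hᵐᵒᵖ] H2 where
  toFun := S
  map_add' := hS.1
  map_smul' a v := hS.2 v a.unop

theorem stmt0 (S : H2 → H2) (hlin : RightLinear S) (hS : ∀ v, S (S v) = -v) :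
    (∀ v : H2, v ≠ 0 →
      lineOf v = lineOf (S v) ∨ (∀ u : H2, ∃ a b : H, u = rsmul v a + rsmul (S v) b)) ∧
    ∃ w : H2, w ≠ 0 ∧ S w = rsmul w (⟨0, 1, 0, 0⟩ : H) := by
  let f := hlin.toLinearMap
  refine ⟨fun v hv => ?_, ?_⟩
  · have hSv : S v ≠ 0 := fun h => hv (neg_eq_zero.1 (by rw [← hS v, h]; exact map_zero f))
    refine (span_singleton_eq_or_span_pair_eq_top finrank_H2 hv hSv).imp
      (fun h => by rw [lineOf_eq_span, lineOf_eq_span, h]) (fun h u => ?_)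
    obtain ⟨a, b, hab⟩ := mem_span_pair.1 (h ▸ mem_top : u ∈ span Hᵐᵒᵖ {v, S v})
    exact ⟨a.unop, b.unop, hab.symm⟩
  · obtain ⟨v, hv⟩ := exists_ne (0 : H2)
    have hii : op (⟨0, 1, 0, 0⟩ : H) * op ⟨0, 1, 0, 0⟩ = -1 :=
      unop_injective (by ext <;> simp)
    have hij : op (⟨0, 1, 0, 0⟩ : H) * op ⟨0, 0, 1, 0⟩ = -(op ⟨0, 0, 1, 0⟩ * op ⟨0, 1, 0, 0⟩) :=
      unop_injective (by ext <;> simp)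
    have hj : op (⟨0, 0, 1, 0⟩ : H) ≠ 0 := fun h => by simpa using congrArg (·.unop.imJ) h
    exact exists_ne_zero_apply_eq_smul f hS hii hj hij hv
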